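/- arXiv:2006.02632 — 8 statements merged into one kernel-verified Lean document; each statement's English description precedes it below -/
import Mathlib

section
/- For solutions of the SIRU system with positive initial data on an interval [0,T), the inequality (I+U)'(t) ≤ τP(I+U)(t) holds whenever 0 ≤ S(t) ≤ P, and hence I(t)+U(t) ≤ (I₀+U₀)e^{τPt} for all t ∈ [0,T); in particular I and U do not blow up in finite time. -/
/-- For SIRU solutions with nonnegative data and `0 ≤ S ≤ P` on `[0,T)`,
one has `(I+U)' ≤ τP(I+U)` there, hence `I(t)+U(t) ≤ (I₀+U₀) e^{τPt}`: no finite-time blow-up. -/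
theorem stmt5 (τ ν ν₁ ν₂ η P T : ℝ)
    (hτ : 0 < τ) (hν₁ : 0 < ν₁) (hν₂ : 0 < ν₂) (hη : 0 < η) (hν : ν = ν₁ + ν₂)
    (hT : 0 < T)
    (S I R U : ℝ → ℝ)
    (hP : P = S 0 + I 0 + U 0)
    (hIode : ∀ t ∈ Set.Ico (0 : ℝ) T, HasDerivAt I (τ * S t * (I t + U t) - ν * I t) t)
    (hUode : ∀ t ∈ Set.Ico (0 : ℝ) T, HasDerivAt U (ν₂ * I t - η * U t) t)
    (hpos : ∀ t ∈ Set.Ico (0 : ℝ) T, 0 ≤ S t ∧ S t ≤ P ∧ 0 ≤ I t ∧ 0 ≤ U t) :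
    (∀ t ∈ Set.Ico (0 : ℝ) T,
        deriv (fun s => I s + U s) t ≤ τ * P * (I t + U t)) ∧
    ∀ t ∈ Set.Ico (0 : ℝ) T, I t + U t ≤ (I 0 + U 0) * Real.exp (τ * P * t) := by
  set f : ℝ → ℝ := fun s => I s + U s with hf
  set f' : ℝ → ℝ := fun s => τ * S s * (I s + U s) - ν₁ * I s - η * U s with hf'
  have hderiv : ∀ t ∈ Set.Ico (0 : ℝ) T, HasDerivAt f (f' t) t := by
    intro t ht
    have : HasDerivAt (fun s => I s + U s) _ t := (hIode t ht).add (hUode t ht)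
    convert this using 1
    show τ * S t * (I t + U t) - ν₁ * I t - η * U t = _; rw [hν]; ring
  have hbound : ∀ t ∈ Set.Ico (0 : ℝ) T, f' t ≤ τ * P * f t := by
    intro t ht
    obtain ⟨hS0, hSP, hI0, hU0⟩ := hpos t ht
    have h1 : τ * S t * (I t + U t) ≤ τ * P * (I t + U t) := by
      nlinarith [mul_nonneg (mul_nonneg hτ.le (sub_nonneg.2 hSP)) (add_nonneg hI0 hU0)]
    simp only [hf', hf]; nlinarith
  constructor
  · intro t ht
    rw [(hderiv t ht).deriv]
    exact hbound t ht
  · intro t ht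
    have hsub : Set.Icc (0 : ℝ) t ⊆ Set.Ico (0 : ℝ) T := fun x hx =>
      ⟨hx.1, lt_of_le_of_lt hx.2 ht.2⟩
    have hcont : ContinuousOn f (Set.Icc 0 t) := fun x hx =>
      ((hderiv x (hsub hx)).continuousAt).continuousWithinAt
    have key := le_gronwallBound_of_liminf_deriv_right_le (f := f) (f' := f')
      (δ := I 0 + U 0) (K := τ * P) (ε := 0) (a := 0) (b := t) hcont
      (fun x hx r hr =>
        ((hderiv x (hsub (Set.Ico_subset_Icc_self hx))).hasDerivWithinAt).liminf_right_slope_le hr)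
      le_rfl
      (fun x hx => by
        rw [add_zero]; exact hbound x (hsub (Set.Ico_subset_Icc_self hx)))
      t ⟨ht.1, le_rfl⟩
    rwa [sub_zero, gronwallBound_ε0] at key
end

section
/- Let S, I, U be a positive solution of the SIRU system on [0,∞) and c := min{ν₁, η} > 0. Then for all t > 0, S(t) ≥ S₀·e^{-τP/c}, where P = S₀+I₀+U₀. In particular, the limit S_∞ = lim_{t→∞} S(t) exists and is strictly positive. -/
/-- For a positive SIRU solution on `[0,∞)`, with `c := min{ν₁, η} > 0` and
`P = S₀+I₀+U₀`, one has `S(t) ≥ S₀ e^{-τP/c}` for all `t > 0`; in particular `S` has a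
strictly positive limit at infinity. -/
theorem stmt8 (τ ν ν₁ ν₂ η : ℝ)
    (hτ : 0 < τ) (hν₁ : 0 < ν₁) (hν₂ : 0 < ν₂) (hη : 0 < η) (hν : ν = ν₁ + ν₂)
    (S I R U : ℝ → ℝ)
    (hSode : ∀ t ≥ (0 : ℝ), HasDerivAt S (-τ * S t * (I t + U t)) t)
    (hIode : ∀ t ≥ (0 : ℝ), HasDerivAt I (τ * S t * (I t + U t) - ν * I t) t)
    (hUode : ∀ t ≥ (0 : ℝ), HasDerivAt U (ν₂ * I t - η * U t) t)
    (hpos : ∀ t ≥ (0 : ℝ), 0 < S t ∧ 0 < I t ∧ 0 < U t) :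
    (∀ t > (0 : ℝ),
        S 0 * Real.exp (-(τ * (S 0 + I 0 + U 0)) / min ν₁ η) ≤ S t) ∧
    ∃ Sinf : ℝ, 0 < Sinf ∧ Filter.Tendsto S Filter.atTop (nhds Sinf) := by
  have hc : (0:ℝ) < min ν₁ η := lt_min hν₁ hη
  set c := min ν₁ η with hcdef
  have hτ' : τ ≠ 0 := ne_of_gt hτ
  have hlog : ∀ t ≥ (0:ℝ), HasDerivAt (fun s => Real.log (S s)) (-τ * (I t + U t)) t := by
    intro t ht
    have hS := (hpos t ht).1
    have h := (Real.hasDerivAt_log (ne_of_gt hS)).comp t (hSode t ht)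
    refine h.congr_deriv ?_
    field_simp
  set W : ℝ → ℝ := fun s => I s + U s + S s - (c/τ) * Real.log (S s) with hWdef
  have hW : ∀ t ≥ (0:ℝ), HasDerivAt W ((c - ν₁) * I t + (c - η) * U t) t := by
    intro t ht
    have h := (((hIode t ht).add (hUode t ht)).add (hSode t ht)).sub
      ((hlog t ht).const_mul (c/τ))
    refine h.congr_deriv ?_
    subst hν
    field_simp
    ring
  have hWanti : AntitoneOn W (Set.Ici 0) := by
    apply antitoneOn_of_deriv_nonpos (convex_Ici 0)
    · intro t ht
      exact (hW t ht).continuousAt.continuousWithinAt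
    · intro t ht
      rw [interior_Ici] at ht
      exact (hW t (le_of_lt ht)).differentiableAt.differentiableWithinAt
    · intro t ht
      rw [interior_Ici] at ht
      rw [(hW t (le_of_lt ht)).deriv]
      have hI := (hpos t (le_of_lt ht)).2.1
      have hU := (hpos t (le_of_lt ht)).2.2
      have h1 : c ≤ ν₁ := min_le_left _ _
      have h2 : c ≤ η := min_le_right _ _
      nlinarith
  have hbound : ∀ t ≥ (0:ℝ), S 0 * Real.exp (-(τ * (S 0 + I 0 + U 0)) / c) ≤ S t := by
    intro t ht
    have hWt := hWanti Set.self_mem_Ici ht ht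
    have h0 := hpos 0 le_rfl
    have hSt := (hpos t ht).1
    have hIt := (hpos t ht).2.1
    have hUt := (hpos t ht).2.2
    have hcτ : (0:ℝ) < c / τ := div_pos hc hτ
    have hkey : (c/τ) * (Real.log (S 0) - Real.log (S t)) ≤ S 0 + I 0 + U 0 := by
      simp only [hWdef] at hWt
      nlinarith [h0.1, h0.2.1, h0.2.2]
    have h2 : c * (Real.log (S 0) - Real.log (S t)) ≤ τ * (S 0 + I 0 + U 0) := by
      have h3 := mul_le_mul_of_nonneg_right hkey hτ.le
      calc c * (Real.log (S 0) - Real.log (S t))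
          = (c/τ) * (Real.log (S 0) - Real.log (S t)) * τ := by field_simp
        _ ≤ (S 0 + I 0 + U 0) * τ := h3
        _ = τ * (S 0 + I 0 + U 0) := by ring
    have hlogle : Real.log (S 0) - τ * (S 0 + I 0 + U 0) / c ≤ Real.log (S t) := by
      have h4 : Real.log (S 0) - Real.log (S t) ≤ τ * (S 0 + I 0 + U 0) / c :=
        (le_div_iff₀' hc).mpr h2
      linarith
    calc S 0 * Real.exp (-(τ * (S 0 + I 0 + U 0)) / c)
        = Real.exp (Real.log (S 0) - τ * (S 0 + I 0 + U 0) / c) := by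
          rw [show -(τ*(S 0+I 0+U 0))/c = -(τ*(S 0+I 0+U 0)/c) by ring,
            Real.exp_neg, Real.exp_sub, Real.exp_log h0.1, div_eq_mul_inv, div_eq_mul_inv]
      _ ≤ Real.exp (Real.log (S t)) := Real.exp_le_exp.mpr hlogle
      _ = S t := Real.exp_log hSt
  have hSanti : AntitoneOn S (Set.Ici 0) := by
    apply antitoneOn_of_deriv_nonpos (convex_Ici 0)
    · intro t ht
      exact (hSode t ht).continuousAt.continuousWithinAt
    · intro t ht
      rw [interior_Ici] at ht
      exact (hSode t (le_of_lt ht)).differentiableAt.differentiableWithinAt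
    · intro t ht
      rw [interior_Ici] at ht
      rw [(hSode t (le_of_lt ht)).deriv]
      have hS := (hpos t (le_of_lt ht)).1
      have hI := (hpos t (le_of_lt ht)).2.1
      have hU := (hpos t (le_of_lt ht)).2.2
      have := mul_pos (mul_pos hτ hS) (add_pos hI hU)
      linarith
  refine ⟨fun t ht => hbound t ht.le, ?_⟩
  set g : ℝ → ℝ := fun t => S (max t 0) with hgdef
  have hg : Antitone g := by
    intro a b hab
    exact hSanti (le_max_right a 0) (le_max_right b 0) (max_le_max hab le_rfl)
  have hbb : BddBelow (Set.range g) := by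
    refine ⟨S 0 * Real.exp (-(τ * (S 0 + I 0 + U 0)) / c), ?_⟩
    rintro y ⟨t, rfl⟩
    exact hbound _ (le_max_right _ _)
  have htend : Filter.Tendsto g Filter.atTop (nhds (⨅ t, g t)) :=
    tendsto_atTop_ciInf hg hbb
  refine ⟨⨅ t, g t, ?_, ?_⟩
  · refine lt_of_lt_of_le ?_ (le_ciInf fun t => hbound _ (le_max_right _ _))
    exact mul_pos (hpos 0 le_rfl).1 (Real.exp_pos _)
  · refine htend.congr' ?_
    filter_upwards [Filter.eventually_ge_atTop (0:ℝ)] with t ht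
    simp [hgdef, max_eq_left ht]
end

section
/- Let S, I, U be a positive solution of the SIRU system with S decreasing to S_∞ > 0. Then I(t)+U(t) → 0 as t → ∞. -/
/-- For a positive SIRU solution with `S` decreasing to `S_∞ > 0`,
one has `I(t)+U(t) → 0` as `t → ∞`. -/
theorem stmt10 (τ ν ν₁ ν₂ η Sinf : ℝ)
    (hτ : 0 < τ) (hν₁ : 0 < ν₁) (hν₂ : 0 < ν₂) (hη : 0 < η) (hν : ν = ν₁ + ν₂)
    (hSinf : 0 < Sinf)
    (S I R U : ℝ → ℝ)
    (hSode : ∀ t ≥ (0 : ℝ), HasDerivAt S (-τ * S t * (I t + U t)) t)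
    (hIode : ∀ t ≥ (0 : ℝ), HasDerivAt I (τ * S t * (I t + U t) - ν * I t) t)
    (hUode : ∀ t ≥ (0 : ℝ), HasDerivAt U (ν₂ * I t - η * U t) t)
    (hpos : ∀ t ≥ (0 : ℝ), 0 < S t ∧ 0 < I t ∧ 0 < U t)
    (hanti : AntitoneOn S (Set.Ici (0 : ℝ)))
    (hlim : Filter.Tendsto S Filter.atTop (nhds Sinf)) :
    Filter.Tendsto (fun t => I t + U t) Filter.atTop (nhds 0) := by
  set V : ℝ → ℝ := fun t => S t + I t + U t with hVdef
  have hVd : ∀ t ≥ (0:ℝ), HasDerivAt V (-(ν₁ * I t) - η * U t) t := by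
    intro t ht
    have h := ((hSode t ht).add (hIode t ht)).add (hUode t ht)
    refine h.congr_deriv ?_
    subst hν; ring
  -- V is antitone on [0,∞)
  have hVanti : AntitoneOn V (Set.Ici (0:ℝ)) := by
    apply antitoneOn_of_deriv_nonpos (convex_Ici 0)
    · intro t ht
      exact ((hVd t ht).continuousAt).continuousWithinAt
    · intro t ht
      rw [interior_Ici] at ht
      exact ((hVd t ht.le).differentiableAt).differentiableWithinAt
    · intro t ht
      rw [interior_Ici] at ht
      rw [(hVd t ht.le).deriv]
      have h1 := (hpos t ht.le).2.1
      have h2 := (hpos t ht.le).2.2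
      nlinarith
  -- V composed with max · 0 is antitone globally
  have hganti : Antitone (fun t => V (max t 0)) := by
    intro a b hab
    exact hVanti (le_max_right a 0) (le_max_right b 0) (max_le_max hab le_rfl)
  have hbdd : BddBelow (Set.range fun t => V (max t 0)) := by
    refine ⟨0, ?_⟩
    rintro x ⟨t, rfl⟩
    have h := hpos (max t 0) (le_max_right t 0)
    simp only [hVdef]
    linarith [h.1, h.2.1, h.2.2]
  have hgL : Filter.Tendsto (fun t => V (max t 0)) Filter.atTop
      (nhds (⨅ t, V (max t 0))) := tendsto_atTop_ciInf hganti hbdd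
  set L : ℝ := ⨅ t, V (max t 0) with hLdef
  have hVL : Filter.Tendsto V Filter.atTop (nhds L) := by
    apply hgL.congr'
    filter_upwards [Filter.eventually_ge_atTop (0:ℝ)] with t ht
    rw [max_eq_left ht]
  -- I + U tends to L - Sinf
  have hf : Filter.Tendsto (fun t => I t + U t) Filter.atTop (nhds (L - Sinf)) := by
    have := hVL.sub hlim
    apply this.congr'
    filter_upwards with t
    simp only [hVdef]; ring
  set M : ℝ := L - Sinf with hMdef
  -- S t ≥ Sinf for t ≥ 0
  have hSge : ∀ t ≥ (0:ℝ), Sinf ≤ S t := by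
    intro t ht
    apply le_of_tendsto hlim
    filter_upwards [Filter.eventually_ge_atTop t] with s hs
    exact hanti ht (ht.trans hs) hs
  have hM0 : 0 ≤ M := by
    apply ge_of_tendsto hf
    filter_upwards [Filter.eventually_ge_atTop (0:ℝ)] with t ht
    have h := hpos t ht
    linarith [h.2.1, h.2.2]
  -- suppose M > 0, derive contradiction
  have hMeq : M = 0 := by
    by_contra hne
    have hM : 0 < M := lt_of_le_of_ne hM0 (Ne.symm hne)
    have hev : ∀ᶠ t in Filter.atTop, M / 2 < I t + U t :=
      hf.eventually (eventually_gt_nhds (by linarith))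
    obtain ⟨T₀, hT₀⟩ := hev.exists_forall_of_atTop
    set T : ℝ := max T₀ 0 with hTdef
    set c : ℝ := τ * Sinf * (M / 2) with hcdef
    have hc : 0 < c := by positivity
    -- h t = S t + c * t is antitone on [T,∞)
    have hhanti : AntitoneOn (fun t => S t + c * t) (Set.Ici T) := by
      apply antitoneOn_of_deriv_nonpos (convex_Ici T)
      · intro t ht
        have ht0 : (0:ℝ) ≤ t := le_trans (le_max_right T₀ 0) ht
        exact (((hSode t ht0).add ((hasDerivAt_id t).const_mul c)).continuousAt).continuousWithinAt
      · intro t ht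
        rw [interior_Ici] at ht
        have ht0 : (0:ℝ) ≤ t := le_trans (le_max_right T₀ 0) ht.le
        exact (((hSode t ht0).add ((hasDerivAt_id t).const_mul c)).differentiableAt).differentiableWithinAt
      · intro t ht
        rw [interior_Ici] at ht
        have ht0 : (0:ℝ) ≤ t := le_trans (le_max_right T₀ 0) ht.le
        have hd : HasDerivAt (fun t => S t + c * t) (-τ * S t * (I t + U t) + c * 1) t :=
          (hSode t ht0).add ((hasDerivAt_id t).const_mul c)
        rw [hd.deriv]
        have h1 : Sinf ≤ S t := hSge t ht0
        have h2 : M / 2 < I t + U t := hT₀ t (le_trans (le_max_left T₀ 0) ht.le)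
        have : τ * Sinf * (M / 2) ≤ τ * S t * (I t + U t) := by
          apply mul_le_mul
          · apply mul_le_mul_of_nonneg_left h1 hτ.le
          · linarith
          · linarith
          · have := (hpos t ht0).1
            positivity
        simp only [hcdef]; linarith
    have hT0 : (0:ℝ) ≤ T := le_max_right T₀ 0
    have hSTge : Sinf ≤ S T := hSge T hT0
    obtain ⟨t₁, ht₁T, hgt⟩ : ∃ t₁, T ≤ t₁ ∧ S T + c * T < Sinf + c * t₁ := by
      refine ⟨T + (S T - Sinf) / c + 1, ?_, ?_⟩
      · have : 0 ≤ (S T - Sinf) / c := div_nonneg (by linarith) hc.le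
        linarith
      · have hx : c * ((S T - Sinf) / c) = S T - Sinf := mul_div_cancel₀ _ hc.ne'
        have : c * (T + (S T - Sinf) / c + 1) = c * T + (S T - Sinf) + c := by
          rw [mul_add, mul_add, hx, mul_one]
        linarith
    have hkey : S t₁ + c * t₁ ≤ S T + c * T :=
      hhanti (Set.self_mem_Ici) ht₁T ht₁T
    have hSt₁ : Sinf ≤ S t₁ := hSge t₁ (hT0.trans ht₁T)
    linarith
  rw [hMeq] at hf
  exact hf
end

section
/- For a positive solution of the SIRU system, the ratio φ := ν₁/ν₂ - R/U satisfies the differential equation φ' = -ν₂·(I/U)·φ. Consequently, if φ(t₀) > 0 for some t₀ and I/U is bounded above on [t₀,T], then φ(T) > 0; in particular R/U can never equal ν₁/ν₂ if it starts strictly below it. -/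
/-- For a positive SIRU solution, `φ := ν₁/ν₂ - R/U` satisfies
`φ' = -ν₂ (I/U) φ`; consequently if `φ(t₀) > 0` and `I/U` is bounded above on `[t₀,T]`,
then `φ(T) > 0`: the ratio `R/U` can never reach `ν₁/ν₂` from strictly below. -/
theorem stmt11 (ν₁ ν₂ η : ℝ) (hν₁ : 0 < ν₁) (hν₂ : 0 < ν₂) (hη : 0 < η)
    (I R U : ℝ → ℝ)
    (hRode : ∀ t ≥ (0 : ℝ), HasDerivAt R (ν₁ * I t - η * R t) t)
    (hUode : ∀ t ≥ (0 : ℝ), HasDerivAt U (ν₂ * I t - η * U t) t)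
    (hpos : ∀ t ≥ (0 : ℝ), 0 < I t ∧ 0 < U t) :
    (∀ t ≥ (0 : ℝ),
        HasDerivAt (fun s => ν₁ / ν₂ - R s / U s)
          (-ν₂ * (I t / U t) * (ν₁ / ν₂ - R t / U t)) t) ∧
    ∀ t₀ T : ℝ, 0 ≤ t₀ → t₀ ≤ T →
      0 < ν₁ / ν₂ - R t₀ / U t₀ →
      (∃ Cb : ℝ, ∀ s ∈ Set.Icc t₀ T, I s / U s ≤ Cb) →
      0 < ν₁ / ν₂ - R T / U T := by
  set φ : ℝ → ℝ := fun s => ν₁ / ν₂ - R s / U s with hφdef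
  have hderiv : ∀ t ≥ (0 : ℝ),
      HasDerivAt φ (-ν₂ * (I t / U t) * (ν₁ / ν₂ - R t / U t)) t := by
    intro t ht
    have hU : U t ≠ 0 := (hpos t ht).2.ne'
    have h1 := (hRode t ht).div (hUode t ht) hU
    have h2 := (hasDerivAt_const t (ν₁ / ν₂)).sub h1
    refine h2.congr_deriv ?_
    field_simp
    ring
  refine ⟨hderiv, ?_⟩
  intro t₀ T ht₀ hT hφ0 ⟨Cb, hCb⟩
  by_contra hneg
  push_neg at hneg
  set C : ℝ := ν₂ * max Cb 0 with hCdef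
  set h : ℝ → ℝ := fun s => φ s * Real.exp (C * s) with hhdef
  have hhderiv : ∀ t ≥ (0 : ℝ),
      HasDerivAt h ((-ν₂ * (I t / U t) * φ t + C * φ t) * Real.exp (C * t)) t := by
    intro t ht
    have he : HasDerivAt (fun s : ℝ => Real.exp (C * s)) (C * Real.exp (C * t)) t := by
      have := ((hasDerivAt_id t).const_mul C).exp
      simpa [mul_comm] using this
    have := (hderiv t ht).mul he
    refine this.congr_deriv ?_
    ring
  -- the bad set
  set S : Set ℝ := {s | s ∈ Set.Icc t₀ T ∧ φ s ≤ 0} with hSdef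
  have hcontφ : ContinuousOn φ (Set.Icc t₀ T) := by
    intro s hs
    exact ((hderiv s (le_trans ht₀ hs.1)).continuousAt).continuousWithinAt
  have hSclosed : IsClosed S := by
    have : S = Set.Icc t₀ T ∩ φ ⁻¹' Set.Iic 0 := by
      ext s; simp [hSdef, Set.mem_Icc]
    rw [this]
    exact hcontφ.preimage_isClosed_of_isClosed isClosed_Icc isClosed_Iic
  have hScpt : IsCompact S :=
    (isCompact_Icc : IsCompact (Set.Icc t₀ T)).of_isClosed_subset hSclosed
      (fun s hs => hs.1)
  have hSne : S.Nonempty := ⟨T, ⟨hT, le_rfl⟩, hneg⟩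
  set t₁ : ℝ := sInf S with ht₁def
  have ht₁S : t₁ ∈ S := hScpt.sInf_mem hSne
  have ht₀t₁ : t₀ < t₁ := by
    rcases lt_or_eq_of_le ht₁S.1.1 with hlt | heq
    · exact hlt
    · exfalso; rw [← heq] at ht₁S; exact absurd ht₁S.2 (not_le.mpr hφ0)
  have hposφ : ∀ s ∈ Set.Ico t₀ t₁, 0 < φ s := by
    intro s hs
    by_contra hc
    push_neg at hc
    have hsS : s ∈ S := ⟨⟨hs.1, le_trans hs.2.le ht₁S.1.2⟩, hc⟩
    exact absurd (csInf_le hScpt.bddBelow hsS) (not_le.mpr hs.2)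
  -- h is monotone on [t₀, t₁]
  have hmono : MonotoneOn h (Set.Icc t₀ t₁) := by
    apply monotoneOn_of_deriv_nonneg (convex_Icc t₀ t₁)
    · intro s hs
      exact ((hhderiv s (le_trans ht₀ hs.1)).continuousAt).continuousWithinAt
    · intro s hs
      rw [interior_Icc] at hs
      exact ((hhderiv s (le_trans ht₀ hs.1.le)).differentiableAt).differentiableWithinAt
    · intro s hs
      rw [interior_Icc] at hs
      have hs0 : (0:ℝ) ≤ s := le_trans ht₀ hs.1.le
      rw [(hhderiv s hs0).deriv]
      have hφpos : 0 < φ s := hposφ s ⟨hs.1.le, hs.2⟩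
      have hIU : I s / U s ≤ max Cb 0 :=
        le_trans (hCb s ⟨hs.1.le, le_trans hs.2.le ht₁S.1.2⟩) (le_max_left _ _)
      have : -ν₂ * (I s / U s) * φ s + C * φ s = (C - ν₂ * (I s / U s)) * φ s := by ring
      rw [this]
      apply mul_nonneg (mul_nonneg _ hφpos.le) (Real.exp_pos _).le
      rw [hCdef]
      nlinarith
  have hle := hmono ⟨le_rfl, ht₀t₁.le⟩ ⟨ht₀t₁.le, le_rfl⟩ ht₀t₁.le
  have h0 : 0 < h t₀ := mul_pos hφ0 (Real.exp_pos _)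
  have h1 : h t₁ ≤ 0 :=
    mul_nonpos_of_nonpos_of_nonneg ht₁S.2 (Real.exp_pos _).le
  linarith
end

section
/- For a positive solution of the SIRU system such that I(t)/U(t) ≥ c > 0 for all t ≥ t₀ and R(t₀)/U(t₀) < ν₁/ν₂, the ratio R(t)/U(t) converges to ν₁/ν₂ from below as t → ∞, with exponential rate: ν₁/ν₂ - R(T)/U(T) ≤ (ν₁/ν₂ - R(t₀)/U(t₀))·e^{-ν₂c(T-t₀)}. -/
/-- For a positive SIRU solution with `I/U ≥ c > 0` for all `t ≥ t₀` and
`R(t₀)/U(t₀) < ν₁/ν₂`, the ratio `R/U` converges to `ν₁/ν₂` from below, with exponential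
rate `ν₁/ν₂ - R(T)/U(T) ≤ (ν₁/ν₂ - R(t₀)/U(t₀)) e^{-ν₂ c (T-t₀)}`. -/
theorem stmt12 (ν₁ ν₂ η c t₀ : ℝ) (hν₁ : 0 < ν₁) (hν₂ : 0 < ν₂) (hη : 0 < η)
    (hc : 0 < c) (ht₀ : 0 ≤ t₀)
    (I R U : ℝ → ℝ)
    (hRode : ∀ t ≥ (0 : ℝ), HasDerivAt R (ν₁ * I t - η * R t) t)
    (hUode : ∀ t ≥ (0 : ℝ), HasDerivAt U (ν₂ * I t - η * U t) t)
    (hpos : ∀ t ≥ (0 : ℝ), 0 < I t ∧ 0 < U t)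
    (hratio : ∀ t ≥ t₀, c ≤ I t / U t)
    (hbelow : R t₀ / U t₀ < ν₁ / ν₂) :
    (∀ T ≥ t₀,
        ν₁ / ν₂ - R T / U T ≤ (ν₁ / ν₂ - R t₀ / U t₀) * Real.exp (-ν₂ * c * (T - t₀))) ∧
    (∀ T ≥ t₀, R T / U T < ν₁ / ν₂) ∧
    Filter.Tendsto (fun t => R t / U t) Filter.atTop (nhds (ν₁ / ν₂)) := by
  have hν₂' : (ν₂ : ℝ) ≠ 0 := ne_of_gt hν₂
  have hu0 : 0 < U t₀ := (hpos t₀ ht₀).2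
  have hA0 : 0 < ν₁ / ν₂ * U t₀ - R t₀ := by
    have := (div_lt_iff₀ hu0).mp hbelow
    linarith
  -- the conserved quantity g t = (ν₁/ν₂ * U t - R t) * exp (η t)
  set g : ℝ → ℝ := fun t => (ν₁ / ν₂ * U t - R t) * Real.exp (η * t) with hg_def
  have hg_deriv : ∀ t ≥ (0 : ℝ), HasDerivAt g 0 t := by
    intro t ht
    have hu := hUode t ht
    have hr := hRode t ht
    have he : HasDerivAt (fun t => Real.exp (η * t)) (Real.exp (η * t) * η) t := by
      simpa using ((hasDerivAt_id t).const_mul η).exp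
    have hprod := ((hu.const_mul (ν₁ / ν₂)).sub hr).mul he
    refine hprod.congr_deriv ?_
    simp only [Pi.sub_apply, Pi.mul_apply]
    have hcan : ν₁ / ν₂ * ν₂ = ν₁ := div_mul_cancel₀ ν₁ hν₂'
    field_simp
    ring
  -- g is constant on [t₀, ∞)
  have hg_const : ∀ T ≥ t₀, g T = g t₀ := by
    intro T hT
    have hcont : ContinuousOn g (Set.Icc t₀ T) := fun x hx =>
      ((hg_deriv x (le_trans ht₀ hx.1)).continuousAt).continuousWithinAt
    have hder : ∀ x ∈ Set.Ico t₀ T, HasDerivWithinAt g 0 (Set.Ici x) x := fun x hx =>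
      (hg_deriv x (le_trans ht₀ hx.1)).hasDerivWithinAt
    exact constant_of_has_deriv_right_zero hcont hder T ⟨hT, le_refl T⟩
  -- p t = U t * exp(η t) * exp(-(ν₂ c) t) is monotone on [t₀, ∞)
  set p : ℝ → ℝ := fun t => U t * Real.exp (η * t) * Real.exp (-(ν₂ * c) * t) with hp_def
  have hp_deriv : ∀ t ≥ t₀, HasDerivAt p
      ((ν₂ * I t - ν₂ * c * U t) * Real.exp (η * t) * Real.exp (-(ν₂ * c) * t)) t := by
    intro t ht
    have hu := hUode t (le_trans ht₀ ht)
    have he : HasDerivAt (fun t => Real.exp (η * t)) (Real.exp (η * t) * η) t := by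
      simpa using ((hasDerivAt_id t).const_mul η).exp
    have he2 : HasDerivAt (fun t => Real.exp (-(ν₂ * c) * t))
        (Real.exp (-(ν₂ * c) * t) * (-(ν₂ * c))) t := by
      simpa using ((hasDerivAt_id t).const_mul (-(ν₂ * c))).exp
    have hprod := (hu.mul he).mul he2
    refine hprod.congr_deriv ?_
    simp only [Pi.mul_apply]
    ring
  have hp_mono : ∀ T ≥ t₀, p t₀ ≤ p T := by
    intro T hT
    have hmono : MonotoneOn p (Set.Icc t₀ T) := by
      apply monotoneOn_of_deriv_nonneg (convex_Icc t₀ T)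
      · exact fun x hx => ((hp_deriv x hx.1).continuousAt).continuousWithinAt
      · intro x hx
        rw [interior_Icc] at hx
        exact ((hp_deriv x hx.1.le).differentiableAt).differentiableWithinAt
      · intro x hx
        rw [interior_Icc] at hx
        rw [(hp_deriv x hx.1.le).deriv]
        have hU : 0 < U x := (hpos x (le_trans ht₀ hx.1.le)).2
        have hI : c * U x ≤ I x := (le_div_iff₀ hU).mp (hratio x hx.1.le)
        have h0 : 0 ≤ ν₂ * I x - ν₂ * c * U x := by nlinarith
        exact mul_nonneg (mul_nonneg h0 (Real.exp_nonneg _)) (Real.exp_nonneg _)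
    exact hmono ⟨le_refl t₀, hT⟩ ⟨hT, le_refl T⟩ hT
  -- key exponential identities
  have hA : Real.exp (-(ν₂ * c) * t₀) * Real.exp (ν₂ * c * t₀) = 1 := by
    rw [← Real.exp_add, show -(ν₂ * c) * t₀ + ν₂ * c * t₀ = 0 by ring, Real.exp_zero]
  -- main pointwise bound and positivity
  have key : ∀ T ≥ t₀,
      (ν₁ / ν₂ - R T / U T ≤ (ν₁ / ν₂ - R t₀ / U t₀) * Real.exp (-ν₂ * c * (T - t₀))) ∧
      R T / U T < ν₁ / ν₂ := by
    intro T hT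
    have huT : 0 < U T := (hpos T (le_trans ht₀ hT)).2
    have hgc := hg_const T hT
    simp only [hg_def] at hgc
    have hexpT : (0 : ℝ) < Real.exp (η * T) := Real.exp_pos _
    have hAT : 0 < ν₁ / ν₂ * U T - R T := by
      have h1 : 0 < (ν₁ / ν₂ * U T - R T) * Real.exp (η * T) := by
        rw [hgc]; exact mul_pos hA0 (Real.exp_pos _)
      nlinarith
    have hEE : Real.exp (-(ν₂ * c) * T) * Real.exp (ν₂ * c * t₀)
        = Real.exp (-ν₂ * c * (T - t₀)) := by
      rw [← Real.exp_add]; congr 1; ring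
    have h2 : U t₀ * Real.exp (η * t₀) ≤
        U T * Real.exp (η * T) * Real.exp (-ν₂ * c * (T - t₀)) := by
      have h3 := mul_le_mul_of_nonneg_right (hp_mono T hT) (Real.exp_nonneg (ν₂ * c * t₀))
      simp only [hp_def] at h3
      calc U t₀ * Real.exp (η * t₀)
          = U t₀ * Real.exp (η * t₀) * Real.exp (-(ν₂ * c) * t₀) * Real.exp (ν₂ * c * t₀) := by
            rw [mul_assoc, hA, mul_one]
        _ ≤ U T * Real.exp (η * T) * Real.exp (-(ν₂ * c) * T) * Real.exp (ν₂ * c * t₀) := h3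
        _ = U T * Real.exp (η * T) * Real.exp (-ν₂ * c * (T - t₀)) := by
            rw [mul_assoc, hEE]
    constructor
    · -- the exponential bound
      have hdiv : ν₁ / ν₂ - R T / U T = (ν₁ / ν₂ * U T - R T) / U T := by
        rw [sub_div, mul_div_cancel_right₀ _ (ne_of_gt huT)]
      have hdiv0 : ν₁ / ν₂ - R t₀ / U t₀ = (ν₁ / ν₂ * U t₀ - R t₀) / U t₀ := by
        rw [sub_div, mul_div_cancel_right₀ _ (ne_of_gt hu0)]
      calc ν₁ / ν₂ - R T / U T = (ν₁ / ν₂ * U T - R T) / U T := hdiv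
        _ ≤ ((ν₁ / ν₂ * U t₀ - R t₀) * Real.exp (-ν₂ * c * (T - t₀))) / U t₀ := by
            rw [div_le_div_iff₀ huT hu0]
            nlinarith [mul_le_mul_of_nonneg_left h2 hA0.le, hgc, hexpT]
        _ = (ν₁ / ν₂ - R t₀ / U t₀) * Real.exp (-ν₂ * c * (T - t₀)) := by
            rw [hdiv0]; ring
    · exact (div_lt_iff₀ huT).mpr (by linarith)
  refine ⟨fun T hT => (key T hT).1, fun T hT => (key T hT).2, ?_⟩
  -- convergence
  have hlin : Filter.Tendsto (fun T : ℝ => -ν₂ * c * (T - t₀)) Filter.atTop Filter.atBot := by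
    have h1 : Filter.Tendsto (fun T : ℝ => T - t₀) Filter.atTop Filter.atTop :=
      Filter.tendsto_atTop_add_const_right _ (-t₀) Filter.tendsto_id
    exact Filter.Tendsto.const_mul_atTop_of_neg (by nlinarith : -ν₂ * c < 0) h1
  have hbound : Filter.Tendsto
      (fun T => (ν₁ / ν₂ - R t₀ / U t₀) * Real.exp (-ν₂ * c * (T - t₀)))
      Filter.atTop (nhds 0) := by
    have := (Real.tendsto_exp_atBot.comp hlin).const_mul (ν₁ / ν₂ - R t₀ / U t₀)
    simpa using this
  have hsq : Filter.Tendsto (fun t => ν₁ / ν₂ - R t / U t) Filter.atTop (nhds 0) := by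
    apply tendsto_of_tendsto_of_tendsto_of_le_of_le' tendsto_const_nhds hbound
    · filter_upwards [Filter.eventually_ge_atTop t₀] with t ht
      linarith [(key t ht).2,
        (div_lt_iff₀ ((hpos t (le_trans ht₀ ht)).2)).mp (key t ht).2]
    · filter_upwards [Filter.eventually_ge_atTop t₀] with t ht
      exact (key t ht).1
  have hfinal := Filter.Tendsto.const_sub (ν₁ / ν₂) hsq
  simpa using hfinal
end

section
/- For a positive solution of the SIRU system with S(t) ≥ S_∞ > 0, the ratio x := I/U satisfies x' = τS - ν₂x² + x(τS + η - ν). Consequently, there exists δ > 0 such that x'(t) > 0 whenever x(t) < δ, and hence I/U is bounded away from 0 on [t₀,∞) if I(t₀)/U(t₀) > 0. -/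
/-- For a positive SIRU solution with `S ≥ S_∞ > 0`, the ratio `x := I/U`
satisfies `x' = τS - ν₂x² + x(τS + η - ν)`; hence there is `δ > 0` with `x' > 0` whenever
`x < δ`, and `I/U` stays bounded away from `0` on `[t₀,∞)` if it starts positive. -/
theorem stmt13 (τ ν ν₁ ν₂ η Sinf : ℝ)
    (hτ : 0 < τ) (hν₁ : 0 < ν₁) (hν₂ : 0 < ν₂) (hη : 0 < η) (hν : ν = ν₁ + ν₂)
    (hSinf : 0 < Sinf)
    (S I U : ℝ → ℝ)
    (hIode : ∀ t ≥ (0 : ℝ), HasDerivAt I (τ * S t * (I t + U t) - ν * I t) t)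
    (hUode : ∀ t ≥ (0 : ℝ), HasDerivAt U (ν₂ * I t - η * U t) t)
    (hpos : ∀ t ≥ (0 : ℝ), 0 < S t ∧ 0 < I t ∧ 0 < U t)
    (hlow : ∀ t ≥ (0 : ℝ), Sinf ≤ S t) :
    (∀ t ≥ (0 : ℝ),
        HasDerivAt (fun s => I s / U s)
          (τ * S t - ν₂ * (I t / U t) ^ 2 + (I t / U t) * (τ * S t + η - ν)) t) ∧
    (∃ δ > (0 : ℝ), ∀ t ≥ (0 : ℝ), I t / U t < δ → 0 < deriv (fun s => I s / U s) t) ∧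
    ∀ t₀ ≥ (0 : ℝ), 0 < I t₀ / U t₀ → ∃ ε > (0 : ℝ), ∀ t ≥ t₀, ε ≤ I t / U t := by
  have hνpos : 0 < ν := by rw [hν]; positivity
  set f : ℝ → ℝ := fun s => I s / U s with hfdef
  have hderiv : ∀ t ≥ (0:ℝ), HasDerivAt f
      (τ * S t - ν₂ * (I t / U t) ^ 2 + (I t / U t) * (τ * S t + η - ν)) t := by
    intro t ht
    have hU := (hpos t ht).2.2
    have h : HasDerivAt (fun y => I y / U y) _ t := (hIode t ht).div (hUode t ht) (ne_of_gt hU)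
    convert h using 1
    field_simp
    ring
  refine ⟨hderiv, ?_⟩
  set δ : ℝ := min 1 (τ * Sinf / (2 * (ν₂ + ν))) with hδdef
  have hδpos : 0 < δ := lt_min one_pos (by positivity)
  have key : ∀ t ≥ (0:ℝ), f t < δ → 0 < deriv f t := by
    intro t ht hlt
    rw [(hderiv t ht).deriv]
    have hx : 0 < I t / U t := div_pos (hpos t ht).2.1 (hpos t ht).2.2
    have hS : Sinf ≤ S t := hlow t ht
    have hx1 : I t / U t < 1 := lt_of_lt_of_le hlt (min_le_left _ _)
    have hx2 : I t / U t < τ * Sinf / (2 * (ν₂ + ν)) := lt_of_lt_of_le hlt (min_le_right _ _)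
    have hx2' : I t / U t * (2 * (ν₂ + ν)) < τ * Sinf :=
      (lt_div_iff₀ (by positivity)).mp hx2
    nlinarith [mul_pos hx (mul_pos hτ (lt_of_lt_of_le hSinf hS)), mul_pos hx hη,
      mul_le_mul_of_nonneg_left hS (le_of_lt hτ), sq_nonneg (I t / U t),
      mul_lt_mul_of_pos_left hx1 (mul_pos hν₂ hx)]
  refine ⟨⟨δ, hδpos, key⟩, ?_⟩
  intro t₀ ht₀ hx0
  set ε : ℝ := min (f t₀) (δ / 2) with hεdef
  have hεpos : 0 < ε := lt_min hx0 (by positivity)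
  have hεδ : ε < δ := lt_of_le_of_lt (min_le_right _ _) (by linarith)
  refine ⟨ε, hεpos, ?_⟩
  intro t₁ ht₁
  by_contra hcon
  push_neg at hcon
  set A : Set ℝ := {t | t ∈ Set.Icc t₀ t₁ ∧ ε ≤ f t} with hAdef
  have ht₀A : t₀ ∈ A := ⟨⟨le_refl _, ht₁⟩, min_le_left _ _⟩
  have hne : A.Nonempty := ⟨t₀, ht₀A⟩
  have hbdd : BddAbove A := ⟨t₁, fun t ht => ht.1.2⟩
  set s := sSup A with hsdef
  have hst₀ : t₀ ≤ s := le_csSup hbdd ht₀A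
  have hs0 : (0:ℝ) ≤ s := le_trans ht₀ hst₀
  have hst₁ : s ≤ t₁ := csSup_le hne (fun t ht => ht.1.2)
  have hc : ContinuousAt f s := (hderiv s hs0).continuousAt
  -- f s ≥ ε
  have hfs : ε ≤ f s := by
    by_contra h
    push_neg at h
    have ev : ∀ᶠ t in nhds s, f t < ε := hc.tendsto.eventually_lt_const h
    rw [Metric.eventually_nhds_iff] at ev
    obtain ⟨r, hr, hball⟩ := ev
    obtain ⟨t, htA, hts⟩ := exists_lt_of_lt_csSup hne (by linarith : s - r < s)
    have hts' : t ≤ s := le_csSup hbdd htA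
    have : f t < ε := hball (by rw [Real.dist_eq]; rw [abs_lt]; constructor <;> linarith)
    exact absurd htA.2 (not_le.mpr this)
  have hslt : s < t₁ := by
    rcases lt_or_eq_of_le hst₁ with h | h
    · exact h
    · exfalso; rw [h] at hfs; linarith
  -- eventually f t > ε to the right of s
  have hEv : ∀ᶠ t in nhdsWithin s (Set.Ioi s), ε < f t := by
    rcases eq_or_lt_of_le hfs with heq | hlt
    · -- f s = ε, use derivative
      have hdpos : 0 < deriv f s := key s hs0 (lt_of_le_of_lt heq.ge hεδ)
      have hD : HasDerivAt f (deriv f s) s := by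
        have h := hderiv s hs0
        rwa [h.deriv]
      rw [hasDerivAt_iff_tendsto_slope] at hD
      have hD' : Filter.Tendsto (slope f s) (nhdsWithin s (Set.Ioi s)) (nhds (deriv f s)) :=
        hD.mono_left (nhdsWithin_mono s (fun x hx => ne_of_gt hx))
      have ev1 : ∀ᶠ t in nhdsWithin s (Set.Ioi s), 0 < slope f s t :=
        hD'.eventually_const_lt hdpos
      filter_upwards [ev1, self_mem_nhdsWithin] with t h1 h2
      have hts : s < t := h2
      rw [slope_def_field] at h1
      have : 0 < f t - f s := by
        have := mul_pos h1 (sub_pos.mpr hts)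
        rwa [div_mul_cancel₀] at this
        exact ne_of_gt (sub_pos.mpr hts)
      linarith
    · filter_upwards [(hc.tendsto.eventually_const_lt hlt).filter_mono nhdsWithin_le_nhds]
        with t h1 using h1
  have ev2 : ∀ᶠ t in nhdsWithin s (Set.Ioi s), t ≤ t₁ := by
    filter_upwards [Ioc_mem_nhdsGT_of_mem (⟨le_refl s, hslt⟩ : s ∈ Set.Ico s t₁)]
      with t ht using ht.2
  obtain ⟨t, ⟨h1a, h1b⟩, h3⟩ := ((hEv.and ev2).and self_mem_nhdsWithin).exists
  have h3 : s < t := h3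
  have htA : t ∈ A := ⟨⟨le_trans hst₀ (le_of_lt h3), h1b⟩, le_of_lt h1a⟩
  have : t ≤ s := le_csSup hbdd htA
  exact absurd h3 (not_lt.mpr this)
end

section
/- For a positive solution of the SIRU system with R₀ = 0, U₀ > 0, such that R(t)/U(t) → ν₁/ν₂ as t → ∞, one has U(t)e^{ηt} → ∞ and R(t)e^{ηt} → ∞; that is, R and U converge to 0 strictly slower than e^{-ηt}. -/
/-- For a positive SIRU solution with `R₀ = 0`, `U₀ > 0` and
`R/U → ν₁/ν₂`, both `U e^{ηt}` and `R e^{ηt}` tend to infinity: `R` and `U` decay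
strictly slower than `e^{-ηt}`. -/
theorem stmt15 (ν₁ ν₂ η : ℝ) (hν₁ : 0 < ν₁) (hν₂ : 0 < ν₂) (hη : 0 < η)
    (I R U : ℝ → ℝ)
    (hRode : ∀ t ≥ (0 : ℝ), HasDerivAt R (ν₁ * I t - η * R t) t)
    (hUode : ∀ t ≥ (0 : ℝ), HasDerivAt U (ν₂ * I t - η * U t) t)
    (hpos : ∀ t ≥ (0 : ℝ), 0 < I t ∧ 0 < U t)
    (hR0 : R 0 = 0) (hU0 : 0 < U 0)
    (hratio : Filter.Tendsto (fun t => R t / U t) Filter.atTop (nhds (ν₁ / ν₂))) :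
    Filter.Tendsto (fun t => U t * Real.exp (η * t)) Filter.atTop Filter.atTop ∧
    Filter.Tendsto (fun t => R t * Real.exp (η * t)) Filter.atTop Filter.atTop := by
  set F : ℝ → ℝ := fun t => ν₂ * (R t * Real.exp (η * t)) - ν₁ * (U t * Real.exp (η * t))
    with hF
  -- F has zero derivative on [0,∞)
  have hFderiv : ∀ t ≥ (0 : ℝ), HasDerivAt F 0 t := by
    intro t ht
    have hexp : HasDerivAt (fun t => Real.exp (η * t)) (η * Real.exp (η * t)) t := by
      simpa [mul_comm] using ((hasDerivAt_id t).const_mul η).exp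
    have hR' := ((hRode t ht).mul hexp).const_mul ν₂
    have hU' := ((hUode t ht).mul hexp).const_mul ν₁
    have := hR'.sub hU'
    have e : ν₂ * ((ν₁ * I t - η * R t) * Real.exp (η * t) + R t * (η * Real.exp (η * t))) -
        ν₁ * ((ν₂ * I t - η * U t) * Real.exp (η * t) + U t * (η * Real.exp (η * t))) = 0 := by ring
    rw [e] at this
    exact this
  -- F is constant on [0,∞)
  have hFconst : ∀ t ≥ (0 : ℝ), F t = F 0 := by
    intro t ht
    have hcont : ContinuousOn F (Set.Icc 0 t) := fun x hx =>
      ((hFderiv x hx.1).continuousAt).continuousWithinAt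
    have hd : ∀ x ∈ Set.Ico (0:ℝ) t, HasDerivWithinAt F 0 (Set.Ici x) x := fun x hx =>
      (hFderiv x hx.1).hasDerivWithinAt
    exact constant_of_has_deriv_right_zero hcont hd t (Set.mem_Icc.2 ⟨ht, le_refl t⟩)
  have hF0 : F 0 = -(ν₁ * U 0) := by simp [hF, hR0]
  -- key identity
  have hkey : ∀ t ≥ (0 : ℝ),
      ν₁ / ν₂ - R t / U t = (ν₁ * U 0 / ν₂) / (U t * Real.exp (η * t)) := by
    intro t ht
    have hU := (hpos t ht).2
    have he : (0:ℝ) < Real.exp (η * t) := Real.exp_pos _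
    have h1 : ν₂ * (R t * Real.exp (η * t)) - ν₁ * (U t * Real.exp (η * t))
        = -(ν₁ * U 0) := by rw [← hF0]; exact hFconst t ht
    field_simp
    linear_combination (-1 : ℝ) * h1
  -- U * exp → ∞
  have hUexp : Filter.Tendsto (fun t => U t * Real.exp (η * t)) Filter.atTop Filter.atTop := by
    set c : ℝ := ν₁ * U 0 / ν₂ with hc
    have hcpos : 0 < c := by positivity
    have h0 : Filter.Tendsto (fun t => ν₁ / ν₂ - R t / U t) Filter.atTop (nhds 0) := by
      simpa using Filter.Tendsto.const_sub (ν₁/ν₂) hratio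
    have h0' : Filter.Tendsto (fun t => c / (U t * Real.exp (η * t))) Filter.atTop (nhds 0) := by
      apply h0.congr'
      filter_upwards [Filter.eventually_ge_atTop (0:ℝ)] with t ht
      exact hkey t ht
    have hpos' : ∀ᶠ t in Filter.atTop, 0 < c / (U t * Real.exp (η * t)) := by
      filter_upwards [Filter.eventually_ge_atTop (0:ℝ)] with t ht
      have hU := (hpos t ht).2
      positivity
    have h0'' : Filter.Tendsto (fun t => c / (U t * Real.exp (η * t))) Filter.atTop
        (nhdsWithin 0 (Set.Ioi 0)) :=
      tendsto_nhdsWithin_of_tendsto_nhds_of_eventually_within _ h0' hpos'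
    have hinv := h0''.inv_tendsto_nhdsGT_zero
    have : Filter.Tendsto (fun t => c * (c / (U t * Real.exp (η * t)))⁻¹)
        Filter.atTop Filter.atTop := hinv.const_mul_atTop hcpos
    apply this.congr'
    filter_upwards [Filter.eventually_ge_atTop (0:ℝ)] with t ht
    have hU := (hpos t ht).2
    have he : (0:ℝ) < Real.exp (η * t) := Real.exp_pos _
    field_simp
  refine ⟨hUexp, ?_⟩
  -- R * exp = (ν₁ * (U*exp) - ν₁ * U 0) / ν₂
  have h2 : Filter.Tendsto
      (fun t => (ν₁ * (U t * Real.exp (η * t)) - ν₁ * U 0) / ν₂) Filter.atTop Filter.atTop := by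
    apply Filter.Tendsto.atTop_div_const hν₂
    exact Filter.tendsto_atTop_add_const_right _ _ (hUexp.const_mul_atTop hν₁)
  apply h2.congr'
  filter_upwards [Filter.eventually_ge_atTop (0:ℝ)] with t ht
  have h1 : ν₂ * (R t * Real.exp (η * t)) - ν₁ * (U t * Real.exp (η * t))
      = -(ν₁ * U 0) := by rw [← hF0]; exact hFconst t ht
  field_simp
  linarith [h1]
end

section
/- Consider the SIRU system with general initial conditions S₀ > 0, I₀ > 0, R₀ ≥ 0, U₀ ≥ 0 such that I'(0) > 0, R'(0) > 0, and U'(0) > 0. Then for all t > 0, the solution exists and S(t), I(t), R(t), U(t) are all strictly positive and strictly less than the total population P = S₀ + I₀ + R₀ + U₀. -/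
open Set Real Filter

/-- If `f' + c f ≥ 0` on `(a,b)` then `f t * exp (c t)` is monotone on `[a,b]`. -/
lemma siru_mono_exp (f f' : ℝ → ℝ) (c a b : ℝ) (hab : a ≤ b)
    (hd : ∀ t ∈ Set.Icc a b, HasDerivAt f (f' t) t)
    (hpos : ∀ t ∈ Set.Ioo a b, 0 ≤ f' t + c * f t) :
    f a * Real.exp (c * a) ≤ f b * Real.exp (c * b) := by
  have hderiv : ∀ t ∈ Set.Icc a b,
      HasDerivAt (fun s => f s * Real.exp (c * s))
        ((f' t + c * f t) * Real.exp (c * t)) t := by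
    intro t ht
    have h1 := (hd t ht).mul
      (((Real.hasDerivAt_exp (c * t)).comp t ((hasDerivAt_id t).const_mul c)))
    refine h1.congr_deriv ?_
    simp [mul_comm]
    ring
  have hmono : MonotoneOn (fun s => f s * Real.exp (c * s)) (Set.Icc a b) := by
    apply monotoneOn_of_deriv_nonneg (convex_Icc a b)
    · exact fun t ht => (hderiv t ht).continuousAt.continuousWithinAt
    · intro t ht
      rw [interior_Icc] at ht
      exact (hderiv t (Set.Ioo_subset_Icc_self ht)).differentiableAt.differentiableWithinAt
    · intro t ht
      rw [interior_Icc] at ht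
      rw [(hderiv t (Set.Ioo_subset_Icc_self ht)).deriv]
      exact mul_nonneg (hpos t ht) (Real.exp_pos _).le
  simpa using hmono (Set.left_mem_Icc.2 hab) (Set.right_mem_Icc.2 hab) hab

/-- Strict version: if `f' + c f > 0` on `(a,b)` then strict increase. -/
lemma siru_strict_exp (f f' : ℝ → ℝ) (c a b : ℝ) (hab : a < b)
    (hd : ∀ t ∈ Set.Icc a b, HasDerivAt f (f' t) t)
    (hpos : ∀ t ∈ Set.Ioo a b, 0 < f' t + c * f t) :
    f a * Real.exp (c * a) < f b * Real.exp (c * b) := by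
  have hderiv : ∀ t ∈ Set.Icc a b,
      HasDerivAt (fun s => f s * Real.exp (c * s))
        ((f' t + c * f t) * Real.exp (c * t)) t := by
    intro t ht
    have h1 := (hd t ht).mul
      (((Real.hasDerivAt_exp (c * t)).comp t ((hasDerivAt_id t).const_mul c)))
    refine h1.congr_deriv ?_
    simp [mul_comm]
    ring
  have hmono : StrictMonoOn (fun s => f s * Real.exp (c * s)) (Set.Icc a b) := by
    apply strictMonoOn_of_deriv_pos (convex_Icc a b)
    · exact fun t ht => (hderiv t ht).continuousAt.continuousWithinAt
    · intro t ht
      rw [interior_Icc] at ht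
      rw [(hderiv t (Set.Ioo_subset_Icc_self ht)).deriv]
      exact mul_pos (hpos t ht) (Real.exp_pos _)
  simpa using hmono (Set.left_mem_Icc.2 hab.le) (Set.right_mem_Icc.2 hab.le) hab

/-- If `f x₀ = 0` and `f` has positive derivative at `x₀`, then `f > 0` just to the right. -/
lemma siru_pos_right (f : ℝ → ℝ) (d x₀ : ℝ) (hf : HasDerivAt f d x₀) (hd : 0 < d)
    (h0 : f x₀ = 0) : ∀ᶠ s in nhdsWithin x₀ (Set.Ioi x₀), 0 < f s := by
  have h1 : Filter.Tendsto (slope f x₀) (nhdsWithin x₀ {x₀}ᶜ) (nhds d) :=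
    hasDerivAt_iff_tendsto_slope.mp hf
  have h2 : ∀ᶠ s in nhdsWithin x₀ {x₀}ᶜ, 0 < slope f x₀ s :=
    h1.eventually (eventually_gt_nhds hd)
  have h3 : nhdsWithin x₀ (Set.Ioi x₀) ≤ nhdsWithin x₀ ({x₀}ᶜ) :=
    nhdsWithin_mono _ (fun x hx => ne_of_gt hx)
  filter_upwards [h3 h2, self_mem_nhdsWithin] with s hs hs'
  rw [slope_def_field, h0, sub_zero] at hs
  have hst : 0 < s - x₀ := sub_pos.2 hs'
  have := mul_pos hs hst
  rwa [div_mul_cancel₀] at this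
  exact hst.ne'

/-- For the SIRU system with general initial data `S₀ > 0`, `I₀ > 0`,
`R₀ ≥ 0`, `U₀ ≥ 0` such that `I'(0) > 0`, `R'(0) > 0`, `U'(0) > 0`, the solution satisfies
`0 < S(t), I(t), R(t), U(t) < P := S₀+I₀+R₀+U₀` for all `t > 0`. -/
theorem stmt19 (τ ν ν₁ ν₂ η : ℝ)
    (hτ : 0 < τ) (hν₁ : 0 < ν₁) (hν₂ : 0 < ν₂) (hη : 0 < η) (hν : ν = ν₁ + ν₂)
    (S I R U : ℝ → ℝ)
    (hS₀ : 0 < S 0) (hI₀ : 0 < I 0) (hR₀ : 0 ≤ R 0) (hU₀ : 0 ≤ U 0)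
    (hSode : ∀ t ≥ (0 : ℝ), HasDerivAt S (-τ * S t * (I t + U t)) t)
    (hIode : ∀ t ≥ (0 : ℝ), HasDerivAt I (τ * S t * (I t + U t) - ν * I t) t)
    (hRode : ∀ t ≥ (0 : ℝ), HasDerivAt R (ν₁ * I t - η * R t) t)
    (hUode : ∀ t ≥ (0 : ℝ), HasDerivAt U (ν₂ * I t - η * U t) t)
    (hI'0 : 0 < τ * S 0 * (I 0 + U 0) - ν * I 0)
    (hR'0 : 0 < ν₁ * I 0 - η * R 0)
    (hU'0 : 0 < ν₂ * I 0 - η * U 0) :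
    ∀ t > (0 : ℝ),
      (0 < S t ∧ S t < S 0 + I 0 + R 0 + U 0) ∧
      (0 < I t ∧ I t < S 0 + I 0 + R 0 + U 0) ∧
      (0 < R t ∧ R t < S 0 + I 0 + R 0 + U 0) ∧
      (0 < U t ∧ U t < S 0 + I 0 + R 0 + U 0) := by
  have hScont : ∀ s : ℝ, 0 ≤ s → ContinuousAt S s := fun s hs => (hSode s hs).continuousAt
  have hIcont : ∀ s : ℝ, 0 ≤ s → ContinuousAt I s := fun s hs => (hIode s hs).continuousAt
  have hRcont : ∀ s : ℝ, 0 ≤ s → ContinuousAt R s := fun s hs => (hRode s hs).continuousAt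
  have hUcont : ∀ s : ℝ, 0 ≤ s → ContinuousAt U s := fun s hs => (hUode s hs).continuousAt
  -- bound for τ(I+U) on compact intervals
  have hbound : ∀ T : ℝ, 0 ≤ T → ∃ C, ∀ s ∈ Set.Icc (0:ℝ) T, τ * (I s + U s) ≤ C := by
    intro T hT
    have hcont : ContinuousOn (fun s => τ * (I s + U s)) (Set.Icc (0:ℝ) T) :=
      continuousOn_const.mul
        (ContinuousOn.add (fun s hs => (hIcont s hs.1).continuousWithinAt)
          (fun s hs => (hUcont s hs.1).continuousWithinAt))
    obtain ⟨x, -, hx⟩ := isCompact_Icc.exists_isMaxOn (Set.nonempty_Icc.2 hT) hcont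
    exact ⟨_, fun s hs => hx hs⟩
  -- global nonnegativity
  have key : ∀ T : ℝ, 0 ≤ T → ∀ s ∈ Set.Icc (0:ℝ) T,
      0 ≤ S s ∧ 0 ≤ I s ∧ 0 ≤ R s ∧ 0 ≤ U s := by
    intro T hT
    obtain ⟨C, hC⟩ := hbound T hT
    set A : Set ℝ := {x | x ∈ Set.Icc (0:ℝ) T ∧
      ∀ s ∈ Set.Icc (0:ℝ) x, 0 ≤ S s ∧ 0 ≤ I s ∧ 0 ≤ R s ∧ 0 ≤ U s} with hA_def
    have h0A : (0:ℝ) ∈ A := by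
      refine ⟨⟨le_refl 0, hT⟩, fun s hs => ?_⟩
      have : s = 0 := le_antisymm hs.2 hs.1
      subst this
      exact ⟨hS₀.le, hI₀.le, hR₀, hU₀⟩
    have hbdd : BddAbove A := ⟨T, fun x hx => hx.1.2⟩
    set t₀ := sSup A with ht₀_def
    have ht₀0 : 0 ≤ t₀ := le_csSup hbdd h0A
    have ht₀T : t₀ ≤ T := csSup_le ⟨0, h0A⟩ (fun x hx => hx.1.2)
    have hlt_mem : ∀ s : ℝ, 0 ≤ s → s < t₀ → 0 ≤ S s ∧ 0 ≤ I s ∧ 0 ≤ R s ∧ 0 ≤ U s := by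
      intro s hs hst
      obtain ⟨a, haA, hlt'⟩ := exists_lt_of_lt_csSup ⟨0, h0A⟩ hst
      exact haA.2 s ⟨hs, hlt'.le⟩
    have hA : ∀ s ∈ Set.Icc (0:ℝ) t₀, 0 ≤ S s ∧ 0 ≤ I s ∧ 0 ≤ R s ∧ 0 ≤ U s := by
      intro s hs
      rcases lt_or_eq_of_le hs.2 with hlt | heq
      · exact hlt_mem s hs.1 hlt
      · rw [heq]
        rcases eq_or_lt_of_le ht₀0 with h0 | h0
        · rw [← h0]; exact ⟨hS₀.le, hI₀.le, hR₀, hU₀⟩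
        · -- limit from the left
          have hev : ∀ᶠ x in nhdsWithin t₀ (Set.Iio t₀),
              0 ≤ S x ∧ 0 ≤ I x ∧ 0 ≤ R x ∧ 0 ≤ U x := by
            filter_upwards [Ioo_mem_nhdsLT_of_mem (Set.mem_Ioc.2 ⟨h0, le_refl t₀⟩)] with x hx
            exact hlt_mem x hx.1.le hx.2
          have hne : (nhdsWithin t₀ (Set.Iio t₀)).NeBot := by infer_instance
          refine ⟨?_, ?_, ?_, ?_⟩
          · exact ge_of_tendsto ((hScont t₀ ht₀0).continuousWithinAt.tendsto)
              (hev.mono fun x hx => hx.1)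
          · exact ge_of_tendsto ((hIcont t₀ ht₀0).continuousWithinAt.tendsto)
              (hev.mono fun x hx => hx.2.1)
          · exact ge_of_tendsto ((hRcont t₀ ht₀0).continuousWithinAt.tendsto)
              (hev.mono fun x hx => hx.2.2.1)
          · exact ge_of_tendsto ((hUcont t₀ ht₀0).continuousWithinAt.tendsto)
              (hev.mono fun x hx => hx.2.2.2)
    -- S and I strictly positive at t₀
    have hSpost : 0 < S t₀ := by
      have hm := siru_mono_exp S (fun s => -τ * S s * (I s + U s)) C 0 t₀ ht₀0
        (fun s hs => hSode s hs.1) ?_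
      · have hE := Real.exp_pos (C * t₀)
        have h2 : S 0 ≤ S t₀ * Real.exp (C * t₀) := by simpa using hm
        by_contra hcon
        push_neg at hcon
        nlinarith [mul_nonneg (neg_nonneg.2 hcon) hE.le]
      · intro s hs
        have hsA := hA s (Set.Ioo_subset_Icc_self hs)
        have hCs := hC s ⟨hs.1.le, le_trans hs.2.le ht₀T⟩
        show 0 ≤ -τ * S s * (I s + U s) + C * S s
        nlinarith [mul_nonneg hsA.1 (sub_nonneg.2 hCs)]
    have hIpost : 0 < I t₀ := by
      have hm := siru_mono_exp I (fun s => τ * S s * (I s + U s) - ν * I s) ν 0 t₀ ht₀0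
        (fun s hs => hIode s hs.1) ?_
      · have hE := Real.exp_pos (ν * t₀)
        have h2 : I 0 ≤ I t₀ * Real.exp (ν * t₀) := by simpa using hm
        by_contra hcon
        push_neg at hcon
        nlinarith [mul_nonneg (neg_nonneg.2 hcon) hE.le]
      · intro s hs
        have hsA := hA s (Set.Ioo_subset_Icc_self hs)
        have h1 : 0 ≤ τ * S s * (I s + U s) :=
          mul_nonneg (mul_nonneg hτ.le hsA.1) (add_nonneg hsA.2.1 hsA.2.2.2)
        show 0 ≤ τ * S s * (I s + U s) - ν * I s + ν * I s
        linarith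
    -- t₀ = T
    rcases eq_or_lt_of_le ht₀T with heq | hltT
    · intro s hs; exact hA s (heq ▸ hs)
    exfalso
    -- eventual nonnegativity to the right of t₀
    have ES : ∀ᶠ x in nhdsWithin t₀ (Set.Ioi t₀), 0 ≤ S x :=
      (((hScont t₀ ht₀0).eventually (eventually_gt_nhds hSpost)).filter_mono
        nhdsWithin_le_nhds).mono fun x hx => hx.le
    have EI : ∀ᶠ x in nhdsWithin t₀ (Set.Ioi t₀), 0 ≤ I x :=
      (((hIcont t₀ ht₀0).eventually (eventually_gt_nhds hIpost)).filter_mono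
        nhdsWithin_le_nhds).mono fun x hx => hx.le
    have ER : ∀ᶠ x in nhdsWithin t₀ (Set.Ioi t₀), 0 ≤ R x := by
      rcases eq_or_lt_of_le (hA t₀ ⟨ht₀0, le_refl _⟩).2.2.1 with h0 | h0
      · have hd : 0 < ν₁ * I t₀ - η * R t₀ := by
          rw [← h0]; simpa using mul_pos hν₁ hIpost
        exact (siru_pos_right R _ t₀ (hRode t₀ ht₀0) hd h0.symm).mono fun x hx => hx.le
      · exact (((hRcont t₀ ht₀0).eventually (eventually_gt_nhds h0)).filter_mono
          nhdsWithin_le_nhds).mono fun x hx => hx.le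
    have EU : ∀ᶠ x in nhdsWithin t₀ (Set.Ioi t₀), 0 ≤ U x := by
      rcases eq_or_lt_of_le (hA t₀ ⟨ht₀0, le_refl _⟩).2.2.2 with h0 | h0
      · have hd : 0 < ν₂ * I t₀ - η * U t₀ := by
          rw [← h0]; simpa using mul_pos hν₂ hIpost
        exact (siru_pos_right U _ t₀ (hUode t₀ ht₀0) hd h0.symm).mono fun x hx => hx.le
      · exact (((hUcont t₀ ht₀0).eventually (eventually_gt_nhds h0)).filter_mono
          nhdsWithin_le_nhds).mono fun x hx => hx.le
    obtain ⟨u, hu, hsub⟩ := mem_nhdsGT_iff_exists_Ioo_subset.mp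
      ((ES.and (EI.and (ER.and EU))) : _)
    rw [Set.mem_Ioi] at hu
    set t₁ := min ((t₀ + u) / 2) T with ht₁_def
    have ht₁gt : t₀ < t₁ := lt_min (by linarith) hltT
    have ht₁lt : t₁ < u := lt_of_le_of_lt (min_le_left _ _) (by linarith)
    have ht₁A : t₁ ∈ A := by
      refine ⟨⟨by linarith, min_le_right _ _⟩, fun s hs => ?_⟩
      rcases le_or_gt s t₀ with h | h
      · exact hA s ⟨hs.1, h⟩
      · exact hsub ⟨h, lt_of_le_of_lt hs.2 ht₁lt⟩
    have : t₁ ≤ t₀ := le_csSup hbdd ht₁A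
    linarith
  have hnn : ∀ s : ℝ, 0 ≤ s → 0 ≤ S s ∧ 0 ≤ I s ∧ 0 ≤ R s ∧ 0 ≤ U s :=
    fun s hs => key s hs s ⟨hs, le_refl s⟩
  -- strict positivity of I everywhere on [0,∞)
  have hIpos : ∀ s : ℝ, 0 ≤ s → 0 < I s := by
    intro s hs
    have hm := siru_mono_exp I (fun x => τ * S x * (I x + U x) - ν * I x) ν 0 s hs
      (fun x hx => hIode x hx.1) ?_
    · have hE := Real.exp_pos (ν * s)
      have h2 : I 0 ≤ I s * Real.exp (ν * s) := by simpa using hm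
      by_contra hcon
      push_neg at hcon
      nlinarith [mul_nonneg (neg_nonneg.2 hcon) hE.le]
    · intro x hx
      have hxA := hnn x hx.1.le
      have h1 : 0 ≤ τ * S x * (I x + U x) :=
        mul_nonneg (mul_nonneg hτ.le hxA.1) (add_nonneg hxA.2.1 hxA.2.2.2)
      show 0 ≤ τ * S x * (I x + U x) - ν * I x + ν * I x
      linarith
  -- strict positivity of R and U for positive times
  have hRpos : ∀ s : ℝ, 0 < s → 0 < R s := by
    intro s hs
    have hm := siru_strict_exp R (fun x => ν₁ * I x - η * R x) η 0 s hs
      (fun x hx => hRode x hx.1) ?_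
    · have hE := Real.exp_pos (η * s)
      have h2 : R 0 < R s * Real.exp (η * s) := by
        calc R 0 ≤ R 0 * Real.exp (η * 0) := by simp
        _ < R s * Real.exp (η * s) := hm
      by_contra hcon
      push_neg at hcon
      nlinarith [mul_nonneg (neg_nonneg.2 hcon) hE.le]
    · intro x hx
      have := mul_pos hν₁ (hIpos x hx.1.le)
      show 0 < ν₁ * I x - η * R x + η * R x
      linarith
  have hUpos : ∀ s : ℝ, 0 < s → 0 < U s := by
    intro s hs
    have hm := siru_strict_exp U (fun x => ν₂ * I x - η * U x) η 0 s hs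
      (fun x hx => hUode x hx.1) ?_
    · have hE := Real.exp_pos (η * s)
      have h2 : U 0 < U s * Real.exp (η * s) := by
        calc U 0 ≤ U 0 * Real.exp (η * 0) := by simp
        _ < U s * Real.exp (η * s) := hm
      by_contra hcon
      push_neg at hcon
      nlinarith [mul_nonneg (neg_nonneg.2 hcon) hE.le]
    · intro x hx
      have := mul_pos hν₂ (hIpos x hx.1.le)
      show 0 < ν₂ * I x - η * U x + η * U x
      linarith
  -- strict positivity of S for positive times
  have hSpos : ∀ s : ℝ, 0 ≤ s → 0 < S s := by
    intro s hs
    obtain ⟨C, hC⟩ := hbound s hs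
    have hm := siru_mono_exp S (fun x => -τ * S x * (I x + U x)) C 0 s hs
      (fun x hx => hSode x hx.1) ?_
    · have hE := Real.exp_pos (C * s)
      have h2 : S 0 ≤ S s * Real.exp (C * s) := by simpa using hm
      by_contra hcon
      push_neg at hcon
      nlinarith [mul_nonneg (neg_nonneg.2 hcon) hE.le]
    · intro x hx
      have hxA := hnn x hx.1.le
      have hCx := hC x (Set.Ioo_subset_Icc_self hx)
      show 0 ≤ -τ * S x * (I x + U x) + C * S x
      nlinarith [mul_nonneg hxA.1 (sub_nonneg.2 hCx)]
  -- total population is strictly decreasing for positive times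
  intro t ht
  have hNode : ∀ s : ℝ, 0 ≤ s →
      HasDerivAt (fun x => S x + I x + R x + U x) (-η * (R s + U s)) s := by
    intro s hs
    have h := (((hSode s hs).add (hIode s hs)).add (hRode s hs)).add (hUode s hs)
    refine h.congr_deriv ?_
    rw [hν]; ring
  have hanti : StrictAntiOn (fun x => S x + I x + R x + U x) (Set.Icc 0 t) := by
    apply strictAntiOn_of_deriv_neg (convex_Icc 0 t)
    · exact fun x hx => (hNode x hx.1).continuousAt.continuousWithinAt
    · intro x hx
      rw [interior_Icc] at hx
      rw [(hNode x hx.1.le).deriv]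
      have := add_pos (hRpos x hx.1) (hUpos x hx.1)
      nlinarith
  have hN : S t + I t + R t + U t < S 0 + I 0 + R 0 + U 0 :=
    hanti (Set.left_mem_Icc.2 ht.le) (Set.right_mem_Icc.2 ht.le) ht
  have h1 := hSpos t ht.le
  have h2 := hIpos t ht.le
  have h3 := hRpos t ht
  have h4 := hUpos t ht
  exact ⟨⟨h1, by linarith⟩, ⟨h2, by linarith⟩, ⟨h3, by linarith⟩, ⟨h4, by linarith⟩⟩
end
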